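/- In any configuration of the system, at least one process is enabled, i.e., there is no terminal (deadlock) configuration of the algorithm. -/

import Mathlib

/-!
In a terminal configuration no recovery rule is enabled, which rules out faulty, erroneous and
illegally rooted processes, so every process is `Ok`. A `Power` process has a quiet subtree and
its neighbours share its colour (otherwise a neighbour could execute `R3` or a conflict rule), so it
could end its phase by `R1`, `R2`, `R6` or `R7`; hence every process is `Idle` or `Working`, and
the root is `Working`. A `Working` process whose children are all `Idle` would either end its phase
or let a child start a new one by `R4`/`R5`, so every `Working` process has a `Working` child. On a
finite graph, sending each `Working` process to such a child is injective, hence surjective, so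
the root would have a parent.
-/

namespace BFS

inductive Status : Type
  | Idle | Working | Power | WeakE | StrongE
deriving DecidableEq

open Status

inductive Rule (V : Type) : Type
  | RC1 | RC2 | RC3 | RC4 | RC5 | RC6
  | R1 | R2
  | R3 (v : V)
  | R4 | R5 | R6 | R7
deriving DecidableEq

structure ProcState (V : Type) where
  P : Option V
  TS : Option V
  C : Bool
  S : Status
  ph : Bool

abbrev Config (V : Type) := V → ProcState V

variable {V : Type} [Fintype V] [DecidableEq V]

/-- Erroneous statuses. -/
def Erroneous (s : Status) : Prop := s = WeakE ∨ s = StrongE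

/-- The children of `u`: neighbors whose parent pointer designates `u`. -/
def Child (G : SimpleGraph V) (c : Config V) (u : V) : Set V :=
  {v | G.Adj u v ∧ (c v).P = some u}

/-- Closed neighborhood `N[u]`. -/
def ClosedNbr (G : SimpleGraph V) (u : V) : Set V := insert u (G.neighborSet u)

def StrongConflict (G : SimpleGraph V) (c : Config V) (u : V) : Prop :=
  (c u).S ≠ StrongE ∧
    ∃ w ∈ ClosedNbr G u, ∃ v ∈ ClosedNbr G u,
      (c v).C ≠ (c u).C ∧ (c w).S = Power ∧ (c v).S = Power

def Conflict (G : SimpleGraph V) (r : V) (c : Config V) (u : V) : Prop :=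
  (u ≠ r ∧ (c u).P ≠ none ∧
      ∃ v ∈ G.neighborSet u, (c v).S = Power ∧ (c v).C ≠ (c u).C) ∨
  (u = r ∧ (c u).S ≠ StrongE ∧
      ∃ v ∈ G.neighborSet u, (c v).S = Power ∧
        ((c v).C ≠ (c u).C ∨ Child G c u = ∅))

def Detached (G : SimpleGraph V) (r : V) (c : Config V) (u : V) : Prop :=
  Child G c u = ∅ ∧ ((c u).P = none ∨ u = r) ∧ (c u).S ≠ Power

def StrongEReady (G : SimpleGraph V) (c : Config V) (u : V) : Prop :=
  (c u).S = StrongE ∧ ∀ v ∈ G.neighborSet u, (c v).S ≠ Power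

def PowerFaulty (G : SimpleGraph V) (c : Config V) (u : V) : Prop :=
  (c u).S = Power ∧ ∃ v ∈ G.neighborSet u, (c v).S = StrongE

def Faulty (G : SimpleGraph V) (r : V) (c : Config V) (u : V) : Prop :=
  u ≠ r ∧ ∃ p, (c u).P = some p ∧ ¬ Erroneous (c p).S ∧
    (Erroneous (c u).S ∨
     (c u).C ≠ (c p).C ∨
     ((c p).S ≠ Working ∧ (c u).S ≠ Idle) ∨
     ((c p).S = (c u).S ∧ (c u).ph ≠ (c p).ph) ∨
     ((c u).S = Power ∧ (c u).ph ≠ (c p).ph) ∨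
     ((c p).S = Power ∧ (Child G c u ≠ ∅ ∨ (c u).ph ≠ (c p).ph)))

def IllegalRoot (G : SimpleGraph V) (r : V) (c : Config V) (u : V) : Prop :=
  u ≠ r ∧ (c u).P = none ∧ ¬ Detached G r c u

def IllegalLiveRoot (G : SimpleGraph V) (r : V) (c : Config V) (u : V) : Prop :=
  IllegalRoot G r c u ∧ ¬ Erroneous (c u).S

def IllegalChild (r : V) (c : Config V) (u : V) : Prop :=
  u ≠ r ∧ ∃ p, (c u).P = some p ∧ Erroneous (c p).S

def Isolated (G : SimpleGraph V) (c : Config V) (u : V) : Prop :=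
  (c u).S = WeakE ∨ (c u).S = Working ∨ StrongEReady G c u

def Ok (G : SimpleGraph V) (r : V) (c : Config V) (u : V) : Prop :=
  ¬ StrongConflict G c u ∧ ¬ Conflict G r c u ∧ ¬ PowerFaulty G c u ∧
  ¬ Faulty G r c u ∧ ¬ IllegalRoot G r c u ∧ ¬ IllegalChild r c u

def QuietSubTree (G : SimpleGraph V) (c : Config V) (u : V) : Prop :=
  ∀ v ∈ Child G c u, (c v).S = Idle ∧ (c v).ph = (c u).ph

def EndFirstPhase (G : SimpleGraph V) (c : Config V) (u : V) : Prop :=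
  (c u).S = Power ∧ QuietSubTree G c u ∧ ∀ v ∈ G.neighborSet u, (c v).C = (c u).C

def EndPhase (G : SimpleGraph V) (c : Config V) (u : V) : Prop :=
  (c u).S = Working ∧ QuietSubTree G c u

def EndLastPhase (G : SimpleGraph V) (c : Config V) (u : V) : Prop :=
  Child G c u = ∅ ∧ (EndFirstPhase G c u ∨ EndPhase G c u)

def EndIntermediatePhase (G : SimpleGraph V) (c : Config V) (u : V) : Prop :=
  Child G c u ≠ ∅ ∧ (EndFirstPhase G c u ∨ EndPhase G c u)

def Connection (G : SimpleGraph V) (r : V) (c : Config V) (u v : V) : Prop :=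
  Detached G r c u ∧ (Isolated G c u ∨ (c u).S = Idle) ∧
  G.Adj u v ∧ (c v).C ≠ (c u).C ∧ (c v).S = Power

def NewPhase (G : SimpleGraph V) (c : Config V) (u : V) : Prop :=
  ∃ p, (c u).P = some p ∧ QuietSubTree G c u ∧ (c u).S = Idle ∧ (c u).ph ≠ (c p).ph

/-- Guards of the rules RC1–RC6, R1–R7 of the algorithm. -/
def Guard (G : SimpleGraph V) (r : V) : Rule V → Config V → V → Prop
  | .RC1, c, u => u = r ∧ ¬ Conflict G r c u ∧ PowerFaulty G c u ∧ QuietSubTree G c u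
  | .RC2, c, u => u = r ∧ Detached G r c u ∧ StrongEReady G c u
  | .RC3, c, u => u = r ∧ Conflict G r c u
  | .RC4, c, u => u ≠ r ∧ StrongConflict G c u
  | .RC5, c, u => u ≠ r ∧ ¬ StrongConflict G c u ∧
      (Conflict G r c u ∨ Faulty G r c u ∨ PowerFaulty G c u ∨
       IllegalLiveRoot G r c u ∨ IllegalChild r c u)
  | .RC6, c, u => u ≠ r ∧ Detached G r c u ∧ Isolated G c u ∧
      ∀ v ∈ G.neighborSet u, (c v).C = (c u).C ∨ (c v).S ≠ Power
  | .R1, c, u => u = r ∧ Ok G r c u ∧ EndLastPhase G c u ∧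
      ∀ v ∈ G.neighborSet u, (c v).S ≠ StrongE
  | .R2, c, u => u = r ∧ Ok G r c u ∧ EndIntermediatePhase G c u
  | .R3 v, c, u => u ≠ r ∧ Ok G r c u ∧ Connection G r c u v
  | .R4, c, u => u ≠ r ∧ Ok G r c u ∧ NewPhase G c u ∧ Child G c u ≠ ∅
  | .R5, c, u => u ≠ r ∧ Ok G r c u ∧ NewPhase G c u ∧ Child G c u = ∅ ∧
      ∀ v ∈ G.neighborSet u, (c v).S ≠ StrongE
  | .R6, c, u => u ≠ r ∧ Ok G r c u ∧ EndIntermediatePhase G c u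
  | .R7, c, u => u ≠ r ∧ Ok G r c u ∧ (c u).P ≠ none ∧ EndLastPhase G c u

/-- Phase of the parent of `u` (or `u`'s own phase if it has no parent). -/
def parentPh (c : Config V) (u : V) : Bool :=
  match (c u).P with
  | some p => (c p).ph
  | none => (c u).ph

/-- The action of each rule: the new local state of the executing process `u`. -/
def execRule (c : Config V) (u : V) : Rule V → ProcState V
  | .RC1 => { c u with S := Working }
  | .RC2 => { c u with S := Working }
  | .RC3 => { c u with S := StrongE }
  | .RC4 => { c u with S := StrongE, P := none }
  | .RC5 => { c u with S := WeakE, P := none }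
  | .RC6 => { c u with S := Idle }
  | .R1 => { c u with C := !(c u).C, S := Power }
  | .R2 => { c u with ph := !(c u).ph, S := Working }
  | .R3 v => { c u with C := (c v).C, ph := (c v).ph, S := Idle, P := some v, TS := some v }
  | .R4 => { c u with ph := parentPh c u, S := Working }
  | .R5 => { c u with ph := parentPh c u, S := Power }
  | .R6 => { c u with S := Idle }
  | .R7 => { c u with S := Idle, P := none }

/-- A computation step: a nonempty set of enabled processes each atomically
executes one enabled rule; all other processes keep their state. -/
def IsStep (G : SimpleGraph V) (r : V) (c1 : Config V)
    (act : V → Option (Rule V)) (c2 : Config V) : Prop :=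
  (∃ u ρ, act u = some ρ) ∧
  ∀ u, (act u = none → c2 u = c1 u) ∧
       ∀ ρ, act u = some ρ → Guard G r ρ c1 u ∧ c2 u = execRule c1 u ρ

def Step (G : SimpleGraph V) (r : V) (c1 c2 : Config V) : Prop :=
  ∃ act, IsStep G r c1 act c2

/-- A process is enabled if the guard of some rule holds at it. -/
def Enabled (G : SimpleGraph V) (r : V) (c : Config V) (u : V) : Prop :=
  ∃ ρ : Rule V, Guard G r ρ c u

/-- Well-formed configurations: pointers designate neighbors, and the root has
no parent and only uses the statuses Power, Working, StrongE. -/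
def WellFormed (G : SimpleGraph V) (r : V) (c : Config V) : Prop :=
  (∀ u v, (c u).P = some v → G.Adj u v) ∧
  (∀ u v, (c u).TS = some v → G.Adj u v) ∧
  (c r).P = none ∧ (c r).TS = none ∧
  ((c r).S = Power ∨ (c r).S = Working ∨ (c r).S = StrongE)

/-- `PowerParent u`: some descendant of `u` (possibly `u`) may take the `Power`
status by a series of R4/R5 moves. -/
inductive PowerParent (c : Config V) : V → Prop
  | base (u p : V) : (c u).P = some p → (c u).S = Idle → (c p).S = Working →
      (c u).ph ≠ (c p).ph → PowerParent c u
  | step (u p : V) : (c u).P = some p → PowerParent c p → (c u).S = Idle →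
      (c u).ph = (c p).ph → PowerParent c u

def Influential (c : Config V) (u : V) : Prop :=
  (c u).S = Power ∨ PowerParent c u

/-- `u` lies on a branch rooted at `r` all of whose members are non-faulty,
and the root is not StrongE. -/
inductive InLegalTree (G : SimpleGraph V) (r : V) (c : Config V) : V → Prop
  | root : (c r).S ≠ StrongE → InLegalTree G r c r
  | child (u p : V) : (c u).P = some p → InLegalTree G r c p →
      ¬ Faulty G r c u → InLegalTree G r c u

def InsideLegalTree (G : SimpleGraph V) (r : V) (c : Config V) (u : V) : Prop :=
  InLegalTree G r c u ∧ (c u).S ≠ Power ∧ Child G c u ≠ ∅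

def UnSafe (G : SimpleGraph V) (r : V) (c : Config V) (u : V) : Prop :=
  InsideLegalTree G r c u ∧
    ∃ v ∈ G.neighborSet u, (c v).C ≠ (c u).C ∧ Influential c v

def UnRegular (G : SimpleGraph V) (r : V) (c : Config V) (u : V) : Prop :=
  ¬ Detached G r c u ∧ ¬ InLegalTree G r c u

/-- Infinite executions of the algorithm (by Theorem `no deadlock` there is no
terminal configuration). -/
structure Execution (G : SimpleGraph V) (r : V) where
  conf : ℕ → Config V
  act : ℕ → V → Option (Rule V)
  valid : ∀ i, IsStep G r (conf i) (act i) (conf (i + 1))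

/-- The suffix of an execution starting at time `k`. -/
def Execution.shift {G : SimpleGraph V} {r : V} (e : Execution G r) (k : ℕ) :
    Execution G r where
  conf := fun i => e.conf (k + i)
  act := fun i => e.act (k + i)
  valid := fun i => e.valid (k + i)

/-- The first round of `e` is completed by time `t`: every process enabled in
the initial configuration has executed a rule or been neutralized before `t`. -/
def CompletesRound (G : SimpleGraph V) (r : V) (e : Execution G r) (t : ℕ) : Prop :=
  ∀ u, Enabled G r (e.conf 0) u →
    ∃ j, j < t ∧ (e.act j u ≠ none ∨ ¬ Enabled G r (e.conf (j + 1)) u)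

/-- `RoundsElapsed G r e k t`: at least `k` rounds of `e` are completed by time `t`. -/
def RoundsElapsed (G : SimpleGraph V) (r : V) (e : Execution G r) : ℕ → ℕ → Prop
  | 0, t => t = 0
  | k + 1, t => ∃ s, s ≤ t ∧ RoundsElapsed G r e k s ∧
      CompletesRound G r (e.shift s) (t - s)

/-- The tree-construction rules R1–R7. -/
def TreeRule : Rule V → Prop := fun ρ =>
  ρ = Rule.R1 ∨ ρ = Rule.R2 ∨ (∃ v, ρ = Rule.R3 v) ∨ ρ = Rule.R4 ∨
  ρ = Rule.R5 ∨ ρ = Rule.R6 ∨ ρ = Rule.R7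

noncomputable def FaultyCount (G : SimpleGraph V) (r : V) (c : Config V) : ℕ :=
  {u | Faulty G r c u}.ncard

/-- Inside-safe executions: insideLegalTree processes execute only R1–R7 and
the number of Faulty processes stays constant. -/
def InsideSafeExec (G : SimpleGraph V) (r : V) (e : Execution G r) : Prop :=
  (∀ i u ρ, InsideLegalTree G r (e.conf i) u → e.act i u = some ρ → TreeRule ρ) ∧
  (∀ i, FaultyCount G r (e.conf i) = FaultyCount G r (e.conf 0))

/-- Safe executions. -/
def SafeExec (G : SimpleGraph V) (r : V) (e : Execution G r) : Prop :=
  (∀ i u ρ, InsideLegalTree G r (e.conf i) u → e.act i u = some ρ → TreeRule ρ) ∧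
  (∀ i u, Influential (e.conf i) u → UnRegular G r (e.conf i) u → e.act i u = none) ∧
  (∀ i u, ¬ PowerFaulty G (e.conf i) u → ¬ PowerFaulty G (e.conf (i + 1)) u) ∧
  (∀ i u, e.act i u ≠ some Rule.RC1 ∧ e.act i u ≠ some Rule.RC4 ∧
      e.act i u ≠ some Rule.RC3 ∧ e.act i u ≠ some Rule.RC2)

/-- Pseudo-regular executions. -/
def PseudoRegularExec (G : SimpleGraph V) (r : V) (e : Execution G r) : Prop :=
  SafeExec G r e ∧
  (∀ i u ρ, InLegalTree G r (e.conf i) u → e.act i u = some ρ → TreeRule ρ) ∧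
  (∀ i u, ¬ UnRegular G r (e.conf i) u → ¬ UnRegular G r (e.conf (i + 1)) u)

/-- Regular executions: pseudo-regular and all processes execute only R1–R7. -/
def RegularExec (G : SimpleGraph V) (r : V) (e : Execution G r) : Prop :=
  PseudoRegularExec G r e ∧ (∀ i u ρ, e.act i u = some ρ → TreeRule ρ)

/-- `u` executes rules infinitely often along `e`. -/
def ActsInfOften {G : SimpleGraph V} {r : V} (e : Execution G r) (u : V) : Prop :=
  ∀ k, ∃ i, k ≤ i ∧ e.act i u ≠ none

def A1 (G : SimpleGraph V) (r : V) (c : Config V) : Prop :=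
  ∀ u, ¬ Faulty G r c u ∧ ¬ IllegalLiveRoot G r c u

def A2 (G : SimpleGraph V) (r : V) (c : Config V) : Prop :=
  A1 G r c ∧ ∀ u, ¬ UnSafe G r c u

def A3 (G : SimpleGraph V) (r : V) (c : Config V) : Prop :=
  A2 G r c ∧ ∀ u, ¬ Influential c u ∨ InLegalTree G r c u

def A4 (G : SimpleGraph V) (r : V) (c : Config V) : Prop :=
  A3 G r c ∧ ∀ u, (c u).S ≠ StrongE

def PIC (r : V) (c : Config V) (u : V) : Prop :=
  Influential c u ∧ (c u).C ≠ (c r).C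

def PICPowerParent (r : V) (c : Config V) (u : V) : Prop :=
  PIC r c u ∧ PowerParent c u

end BFS

theorem exists_parent_of_forall_exists_child {α : Type*} [Finite α] {P : α → Option α}
    {S : Set α} (h : ∀ u ∈ S, ∃ w ∈ S, P w = some u) : ∀ u ∈ S, ∃ p ∈ S, P u = some p := by
  choose f hfS hf using h
  let g : S → S := fun u => ⟨f u u.2, hfS u u.2⟩
  have hg : g.Injective := by
    intro x y hxy
    have hP : P (g x) = P (g y) := by rw [hxy]
    exact Subtype.ext (Option.some_injective _ ((hf x x.2).symm.trans (hP.trans (hf y y.2))))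
  intro u hu
  obtain ⟨x, hx⟩ := Finite.injective_iff_surjective.mp hg ⟨u, hu⟩
  have hxu : f x x.2 = u := congrArg Subtype.val hx
  exact ⟨x, x.2, hxu ▸ hf x x.2⟩

namespace BFS

open Status

variable {V : Type} {G : SimpleGraph V} {r : V} {c : Config V} {u v p : V}

theorem ne_root_of_parent_eq_some (hr : (c r).P = none) (hv : (c v).P = some p) : v ≠ r := by
  rintro rfl
  simp [hr] at hv

def Terminal (G : SimpleGraph V) (r : V) (c : Config V) : Prop :=
  ∀ u, ¬ Enabled G r c u

namespace Terminal

theorem not_guard (hT : Terminal G r c) (ρ : Rule V) (u : V) : ¬ Guard G r ρ c u :=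
  fun h => hT u ⟨ρ, h⟩

theorem not_strongConflict_of_ne_root (hT : Terminal G r c) (hu : u ≠ r) : ¬ StrongConflict G c u :=
  fun h => hT.not_guard .RC4 u ⟨hu, h⟩

theorem not_faulty (hT : Terminal G r c) (u : V) : ¬ Faulty G r c u :=
  fun h => hT.not_guard .RC5 u ⟨h.1, hT.not_strongConflict_of_ne_root h.1, .inr (.inl h)⟩

theorem not_illegalLiveRoot (hT : Terminal G r c) (u : V) : ¬ IllegalLiveRoot G r c u :=
  fun h => hT.not_guard .RC5 u
    ⟨h.1.1, hT.not_strongConflict_of_ne_root h.1.1, .inr (.inr (.inr (.inl h)))⟩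

theorem not_illegalChild (hT : Terminal G r c) (u : V) : ¬ IllegalChild r c u :=
  fun h => hT.not_guard .RC5 u
    ⟨h.1, hT.not_strongConflict_of_ne_root h.1, .inr (.inr (.inr (.inr h)))⟩

theorem not_conflict (hT : Terminal G r c) (u : V) : ¬ Conflict G r c u := by
  intro h
  by_cases hu : u = r
  · exact hT.not_guard .RC3 u ⟨hu, h⟩
  · exact hT.not_guard .RC5 u ⟨hu, hT.not_strongConflict_of_ne_root hu, .inl h⟩

theorem quietSubTree_of_idle_or_power (hT : Terminal G r c) (hr : (c r).P = none)
    (hu : (c u).S = Idle ∨ (c u).S = Power) : QuietSubTree G c u := by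
  intro v hv
  have hvr := ne_root_of_parent_eq_some hr hv.2
  have hpu : ¬ Erroneous (c u).S := by rcases hu with h | h <;> simp [Erroneous, h]
  have hSv : (c v).S = Idle := by
    by_contra hS
    exact hT.not_faulty v ⟨hvr, u, hv.2, hpu, by rcases hu with h | h <;> simp [h, hS]⟩
  refine ⟨hSv, ?_⟩
  by_contra hph
  exact hT.not_faulty v ⟨hvr, u, hv.2, hpu, by rcases hu with h | h <;> simp [h, hSv, hph]⟩

theorem not_powerFaulty (hT : Terminal G r c) (hr : (c r).P = none) (u : V) :
    ¬ PowerFaulty G c u := by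
  intro h
  by_cases hu : u = r
  · exact hT.not_guard .RC1 u
      ⟨hu, hT.not_conflict u, h, hT.quietSubTree_of_idle_or_power hr (.inr h.1)⟩
  · exact hT.not_guard .RC5 u ⟨hu, hT.not_strongConflict_of_ne_root hu, .inr (.inr (.inl h))⟩

theorem child_eq_empty_of_erroneous (hT : Terminal G r c) (hr : (c r).P = none)
    (hu : Erroneous (c u).S) : Child G c u = ∅ :=
  Set.eq_empty_iff_forall_notMem.mpr fun v hv =>
    hT.not_illegalChild v ⟨ne_root_of_parent_eq_some hr hv.2, u, hv.2, hu⟩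

theorem parent_eq_none_of_erroneous (hT : Terminal G r c) (hu : Erroneous (c u).S)
    (hur : u ≠ r) : (c u).P = none := by
  cases hp : (c u).P with
  | none => rfl
  | some q =>
    by_cases hq : Erroneous (c q).S
    · exact (hT.not_illegalChild u ⟨hur, q, hp, hq⟩).elim
    · exact (hT.not_faulty u ⟨hur, q, hp, hq, .inl hu⟩).elim

theorem detached_of_erroneous (hT : Terminal G r c) (hr : (c r).P = none)
    (hu : Erroneous (c u).S) : Detached G r c u := by
  refine ⟨hT.child_eq_empty_of_erroneous hr hu, ?_, by rcases hu with h | h <;> simp [h]⟩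
  by_cases hur : u = r
  · exact .inr hur
  · exact .inl (hT.parent_eq_none_of_erroneous hu hur)

theorem status_ne_strongE (hT : Terminal G r c) (hr : (c r).P = none) (u : V) :
    (c u).S ≠ StrongE := by
  intro hSE
  have hdet := hT.detached_of_erroneous hr (.inr hSE)
  have hready : StrongEReady G c u :=
    ⟨hSE, fun v hv hPow => hT.not_powerFaulty hr v ⟨hPow, u, G.adj_symm hv, hSE⟩⟩
  by_cases hur : u = r
  · exact hT.not_guard .RC2 u ⟨hur, hdet, hready⟩
  · refine hT.not_guard .RC6 u ⟨hur, hdet, .inr (.inr hready), fun v hv => .inr fun hPow => ?_⟩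
    exact hT.not_powerFaulty hr v ⟨hPow, u, G.adj_symm hv, hSE⟩

theorem not_strongConflict (hT : Terminal G r c) (u : V) : ¬ StrongConflict G c u := by
  by_cases hu : u = r
  · subst hu
    rintro ⟨hSE, -, -, v, hv, hC, -, hPow⟩
    rcases Set.mem_insert_iff.mp hv with rfl | hv
    · exact hC rfl
    · exact hT.not_conflict u (.inr ⟨rfl, hSE, v, hv, hPow, .inl hC⟩)
  · exact hT.not_strongConflict_of_ne_root hu

theorem ok_of_not_illegalRoot (hT : Terminal G r c) (hr : (c r).P = none)
    (hu : ¬ IllegalRoot G r c u) : Ok G r c u :=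
  ⟨hT.not_strongConflict u, hT.not_conflict u, hT.not_powerFaulty hr u, hT.not_faulty u, hu,
    hT.not_illegalChild u⟩

theorem status_ne_weakE (hT : Terminal G r c) (hr : (c r).P = none) (hroot : (c r).S ≠ WeakE)
    (u : V) : (c u).S ≠ WeakE := by
  intro hW
  have hur : u ≠ r := by rintro rfl; exact hroot hW
  have hdet := hT.detached_of_erroneous hr (.inl hW)
  by_cases hall : ∀ v ∈ G.neighborSet u, (c v).C = (c u).C ∨ (c v).S ≠ Power
  · exact hT.not_guard .RC6 u ⟨hur, hdet, .inl hW, hall⟩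
  · push Not at hall
    obtain ⟨v, hv, hC, hPow⟩ := hall
    exact hT.not_guard (.R3 v) u ⟨hur, hT.ok_of_not_illegalRoot hr fun h => h.2.2 hdet, hdet,
      .inl (.inl hW), hv, hC, hPow⟩

theorem not_illegalRoot (hT : Terminal G r c) (hr : (c r).P = none) (hroot : (c r).S ≠ WeakE)
    (u : V) : ¬ IllegalRoot G r c u := fun h =>
  hT.not_illegalLiveRoot u ⟨h, by
    rintro (hW | hSE)
    exacts [hT.status_ne_weakE hr hroot u hW, hT.status_ne_strongE hr u hSE]⟩

theorem ok (hT : Terminal G r c) (hr : (c r).P = none) (hroot : (c r).S ≠ WeakE) (u : V) :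
    Ok G r c u :=
  hT.ok_of_not_illegalRoot hr (hT.not_illegalRoot hr hroot u)

theorem detached_of_parent_eq_none (hT : Terminal G r c) (hr : (c r).P = none)
    (hroot : (c r).S ≠ WeakE) (hur : u ≠ r) (hp : (c u).P = none) : Detached G r c u := by
  by_contra hdet
  exact hT.not_illegalRoot hr hroot u ⟨hur, hp, hdet⟩

theorem color_eq_of_status_eq_power (hT : Terminal G r c) (hr : (c r).P = none)
    (hroot : (c r).S ≠ WeakE) (hu : (c u).S = Power) (huv : G.Adj u v) :
    (c v).C = (c u).C := by
  by_contra hC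
  by_cases hvr : v = r
  · subst hvr
    exact hT.not_conflict v
      (.inr ⟨rfl, hT.status_ne_strongE hr v, u, huv.symm, hu, .inl (Ne.symm hC)⟩)
  cases hp : (c v).P with
  | some q =>
    exact hT.not_conflict v (.inl ⟨hvr, by simp [hp], u, huv.symm, hu, Ne.symm hC⟩)
  | none =>
    have hdet := hT.detached_of_parent_eq_none hr hroot hvr hp
    have hiso : Isolated G c v ∨ (c v).S = Idle := by
      cases hS : (c v).S with
      | Idle => exact .inr rfl
      | Working => exact .inl (.inr (.inl hS))
      | Power => exact absurd hS hdet.2.2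
      | WeakE => exact .inl (.inl hS)
      | StrongE => exact absurd hS (hT.status_ne_strongE hr v)
    exact hT.not_guard (.R3 u) v ⟨hvr, hT.ok hr hroot v, hdet, hiso, huv.symm, Ne.symm hC, hu⟩

theorem not_quietSubTree (hT : Terminal G r c) (hr : (c r).P = none) (hroot : (c r).S ≠ WeakE)
    (hu : (c u).S = Working ∨ (c u).S = Power) : ¬ QuietSubTree G c u := by
  intro hq
  have hend : EndFirstPhase G c u ∨ EndPhase G c u := by
    rcases hu with hW | hP
    · exact .inr ⟨hW, hq⟩
    · exact .inl ⟨hP, hq, fun v hv => hT.color_eq_of_status_eq_power hr hroot hP hv⟩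
  have hok := hT.ok hr hroot u
  by_cases hur : u = r
  · by_cases hc : Child G c u = ∅
    · exact hT.not_guard .R1 u ⟨hur, hok, ⟨hc, hend⟩, fun v _ => hT.status_ne_strongE hr v⟩
    · exact hT.not_guard .R2 u ⟨hur, hok, ⟨hc, hend⟩⟩
  cases hp : (c u).P with
  | some q =>
    by_cases hc : Child G c u = ∅
    · exact hT.not_guard .R7 u ⟨hur, hok, by simp [hp], ⟨hc, hend⟩⟩
    · exact hT.not_guard .R6 u ⟨hur, hok, ⟨hc, hend⟩⟩
  | none =>
    have hdet := hT.detached_of_parent_eq_none hr hroot hur hp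
    have hW : (c u).S = Working := hu.resolve_right hdet.2.2
    refine hT.not_guard .RC6 u ⟨hur, hdet, .inr (.inl hW), fun v hv => ?_⟩
    by_cases hPow : (c v).S = Power
    · exact .inl (hT.color_eq_of_status_eq_power hr hroot hPow hv.symm).symm
    · exact .inr hPow

theorem status_ne_power (hT : Terminal G r c) (hr : (c r).P = none) (hroot : (c r).S ≠ WeakE)
    (u : V) : (c u).S ≠ Power := fun hP =>
  hT.not_quietSubTree hr hroot (.inr hP) (hT.quietSubTree_of_idle_or_power hr (.inr hP))

theorem status_eq_idle_or_working (hT : Terminal G r c) (hr : (c r).P = none)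
    (hroot : (c r).S ≠ WeakE) (u : V) : (c u).S = Idle ∨ (c u).S = Working := by
  cases hS : (c u).S with
  | Idle => exact .inl rfl
  | Working => exact .inr rfl
  | Power => exact absurd hS (hT.status_ne_power hr hroot u)
  | WeakE => exact absurd hS (hT.status_ne_weakE hr hroot u)
  | StrongE => exact absurd hS (hT.status_ne_strongE hr u)

theorem exists_working_child (hT : Terminal G r c) (hr : (c r).P = none)
    (hroot : (c r).S ≠ WeakE) (hu : (c u).S = Working) :
    ∃ w, (c w).S = Working ∧ (c w).P = some u := by
  by_contra hno
  refine hT.not_quietSubTree hr hroot (.inl hu) fun v hv => ?_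
  have hSv : (c v).S = Idle :=
    (hT.status_eq_idle_or_working hr hroot v).resolve_right fun hW => hno ⟨v, hW, hv.2⟩
  refine ⟨hSv, ?_⟩
  by_contra hph
  have hvr := ne_root_of_parent_eq_some hr hv.2
  have hnew : NewPhase G c v := ⟨u, hv.2, hT.quietSubTree_of_idle_or_power hr (.inl hSv), hSv, hph⟩
  by_cases hc : Child G c v = ∅
  · exact hT.not_guard .R5 v ⟨hvr, hT.ok hr hroot v, hnew, hc, fun w _ => hT.status_ne_strongE hr w⟩
  · exact hT.not_guard .R4 v ⟨hvr, hT.ok hr hroot v, hnew, hc⟩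

end Terminal

theorem stmt0_general {V : Type} [Fintype V]
    (G : SimpleGraph V) (r : V)
    (c : Config V) (hwf : WellFormed G r c) :
    ∃ u, Enabled G r c u := by
  by_contra hne
  have hT : Terminal G r c := fun u hu => hne ⟨u, hu⟩
  obtain ⟨-, -, hr, -, hrS⟩ := hwf
  have hroot : (c r).S ≠ WeakE := by rcases hrS with h | h | h <;> simp [h]
  have hrW : (c r).S = Working :=
    (hrS.resolve_left (hT.status_ne_power hr hroot r)).resolve_right (hT.status_ne_strongE hr r)
  obtain ⟨p, -, hp⟩ := exists_parent_of_forall_exists_child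
    (fun u hu => hT.exists_working_child hr hroot hu) r hrW
  simp [hr] at hp

/-- In any (well-formed) configuration of the system, at least one
process is enabled: there is no terminal configuration of the algorithm. -/
theorem stmt0 {V : Type} [Fintype V] [DecidableEq V]
    (G : SimpleGraph V) (r : V) (hconn : G.Connected)
    (c : Config V) (hwf : WellFormed G r c) :
    ∃ u, Enabled G r c u :=
  stmt0_general G r c hwf

end BFS
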